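/- Let Γ act transitively on the vertices of a graph G by automorphisms, let u be a vertex and λ an involution in Γ such that λ(u) is adjacent to u and the subgraph G_{u,λ} generated by λ has every vertex of degree k. Then every connected component of G_{u,λ} consists of two vertices v, λ(v) joined by k parallel edges; in particular if k = 1 then G_{u,λ} is a perfect matching of G, and if k ≥ 3 then G_{u,λ} contains a spanning cubic bipartite subgraph. -/

import Mathlib

/-- A multigraph: an abstract edge set `E` together with an assignment of an unordered
pair of end-vertices to each edge. Loops and parallel edges are allowed. -/
structure Multigraph (V E : Type*) where
  ends : E → Sym2 V

namespace Multigraph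

variable {V E : Type*}

/-- A multigraph is loopless if no edge is a loop. -/
def Loopless (G : Multigraph V E) : Prop := ∀ e, ¬ (G.ends e).IsDiag

/-- Two vertices are adjacent if some edge joins them. -/
def Adj (G : Multigraph V E) (v w : V) : Prop := ∃ e, G.ends e = s(v, w)

/-- A multigraph is connected if any two vertices are joined by a walk. -/
def Connected (G : Multigraph V E) : Prop := ∀ v w : V, Relation.ReflTransGen G.Adj v w

open Classical in
/-- The number of times edge `e` is incident with vertex `v` (a loop counts twice). -/
noncomputable def incCount (G : Multigraph V E) (v : V) (e : E) : ℕ :=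
  if G.ends e = Sym2.diag v then 2 else if v ∈ G.ends e then 1 else 0

/-- The degree of a vertex. -/
noncomputable def degree (G : Multigraph V E) [Fintype E] (v : V) : ℕ :=
  ∑ e, G.incCount v e

open Classical in
/-- The degree of a vertex in the spanning subgraph with edge set `S`. -/
noncomputable def degreeIn (G : Multigraph V E) [Fintype E] (S : Set E) (v : V) : ℕ :=
  ∑ e, if e ∈ S then G.incCount v e else 0

/-- An orientation of a multigraph: each edge gets a tail and a head realizing its ends. -/
structure Orientation (G : Multigraph V E) where
  tail : E → V
  head : E → V
  consistent : ∀ e, G.ends e = s(tail e, head e)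

open Classical in
/-- Sum of `φ` over the edges with tail `v`. -/
noncomputable def outflow [Fintype E] {G : Multigraph V E} (D : G.Orientation)
    (φ : E → ℤ) (v : V) : ℤ :=
  ∑ e, if D.tail e = v then φ e else 0

open Classical in
/-- Sum of `φ` over the edges with head `v`. -/
noncomputable def inflow [Fintype E] {G : Multigraph V E} (D : G.Orientation)
    (φ : E → ℤ) (v : V) : ℤ :=
  ∑ e, if D.head e = v then φ e else 0

/-- `(D, φ)` is a `k`-flow: all values have absolute value `< k` and flow is conserved. -/
def IsFlow [Fintype E] {G : Multigraph V E} (D : G.Orientation) (φ : E → ℤ) (k : ℕ) : Prop :=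
  (∀ e, |φ e| < (k : ℤ)) ∧ ∀ v : V, outflow D φ v = inflow D φ v

/-- `G` admits a nowhere-zero `k`-flow. -/
def HasNowhereZeroFlow (G : Multigraph V E) [Fintype E] (k : ℕ) : Prop :=
  ∃ (D : G.Orientation) (φ : E → ℤ), IsFlow D φ k ∧ ∀ e, φ e ≠ 0

/-- The automorphism group of a multigraph, as a subgroup of `Perm V × Perm E`:
pairs of permutations compatible with the incidence structure. -/
def aut (G : Multigraph V E) : Subgroup (Equiv.Perm V × Equiv.Perm E) where
  carrier := {p | ∀ e, G.ends (p.2 e) = (G.ends e).map p.1}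
  one_mem' := by
    intro e
    simp
  mul_mem' := by
    intro p q hp hq e
    have h1 := hp (q.2 e)
    have h2 := hq e
    simp only [Prod.snd_mul, Prod.fst_mul, Equiv.Perm.mul_apply, Equiv.Perm.coe_mul]
    rw [h1, h2, Sym2.map_map]
  inv_mem' := by
    intro p hp e
    have h := hp ((p.2)⁻¹ e)
    rw [show p.2 (p.2⁻¹ e) = e from Equiv.apply_symm_apply p.2 e] at h
    rw [Prod.snd_inv, Prod.fst_inv, h, Sym2.map_map]
    have : (⇑(p.1)⁻¹ ∘ ⇑p.1) = id := by
      ext x; simp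
    rw [this, Sym2.map_id, id_eq]

end Multigraph

open Multigraph in
/-- The edge set of the spanning subgraph `G_{u,a}` of `G` generated by `a` with
reference vertex `u`. -/
def genEdges {Γ V E : Type*} [Group Γ] [MulAction Γ V]
    (G : Multigraph V E) (u : V) (a : Γ) : Set E :=
  {e | ∃ γ : Γ, ∃ β ∈ MulAction.stabilizer Γ u, G.ends e = s(γ • u, (γ * β * a) • u)}

/-!
Because `λ` is central, for `β` in the stabilizer of `u` we get `γβλ(u) = λ(γβ(u)) = λ(γ(u))`,
so every edge of `G_{u,λ}` joins some vertex `v` to `λ(v)`. Since `λ` is an involution without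
fixed vertices, the edges of `G_{u,λ}` at `v` are exactly the edges joining `v` and `λ(v)`, which
gives the component structure. Keeping three of the `k` parallel edges on each pair `{v, λ(v)}`
gives a cubic spanning subgraph, and it is bipartite because choosing one vertex from each pair
`{v, λ(v)}` is a proper 2-colouring.
-/

open Finset

open Classical in
theorem Finset.exists_subset_card_filter_eq {α β : Type*} [Fintype α]
    (g : α → β) (S : Set α) (n : ℕ) :
    ∃ T ⊆ S, ∀ b, n ≤ #{a | a ∈ S ∧ g a = b} → #{a | a ∈ T ∧ g a = b} = n := by
  classical
  have hpick : ∀ b, ∃ t ⊆ ({a | a ∈ S ∧ g a = b} : Finset α),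
      n ≤ #{a | a ∈ S ∧ g a = b} → #t = n := fun b => by
    by_cases hn : n ≤ #{a | a ∈ S ∧ g a = b}
    · obtain ⟨t, hts, ht⟩ := exists_subset_card_eq hn
      exact ⟨t, hts, fun _ => ht⟩
    · exact ⟨∅, empty_subset _, fun h => absurd h hn⟩
  choose t hts ht using hpick
  have hmem : ∀ {a b}, a ∈ t b → a ∈ S ∧ g a = b := fun h => by
    simpa using hts _ h
  refine ⟨{a | a ∈ t (g a)}, fun a ha => (hmem ha).1, fun b hb => ?_⟩
  convert ht b hb using 2
  ext a
  simp only [Set.mem_ofPred_eq, mem_filter, mem_univ, true_and]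
  exact ⟨fun ⟨ha, hab⟩ => hab ▸ ha, fun ha => ⟨(hmem ha).2 ▸ ha, (hmem ha).2⟩⟩

theorem Function.Involutive.exists_bool_ne {V : Type*} {f : V → V} (hf : f.Involutive)
    (hfree : ∀ v, f v ≠ v) : ∃ c : V → Bool, ∀ v, c (f v) ≠ c v := by
  let := IsWellOrder.linearOrder (WellOrderingRel (α := V))
  refine ⟨fun v => decide (v < f v), fun v => ?_⟩
  simp only [hf v, ne_eq, decide_eq_decide]
  rcases lt_or_gt_of_ne (hfree v) with h | h
  · exact fun hiff => lt_asymm h (hiff.mp h)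
  · exact fun hiff => lt_asymm h (hiff.mpr h)

theorem Function.Involutive.mem_sym2_mk_iff {V : Type*} {f : V → V} (hf : f.Involutive)
    {v w : V} : v ∈ s(w, f w) ↔ s(w, f w) = s(v, f v) := by
  refine ⟨fun h => ?_, fun h => h ▸ Sym2.mem_mk_left v (f v)⟩
  rcases Sym2.mem_iff.mp h with rfl | rfl
  · rfl
  · rw [hf w]
    exact Sym2.eq_swap

namespace Multigraph

variable {V E : Type*} (G : Multigraph V E) {S : Set E} {f : V → V}

open Classical in
theorem degreeIn_eq_card_of_not_isDiag [Fintype E] (hS : ∀ e ∈ S, ¬ (G.ends e).IsDiag)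
    (v : V) :
    G.degreeIn S v = #{e | e ∈ S ∧ v ∈ G.ends e} := by
  rw [degreeIn, card_filter]
  refine sum_congr rfl fun e _ => ?_
  by_cases he : e ∈ S
  · have hloop : G.ends e ≠ Sym2.diag v := fun h => hS e he (h ▸ Sym2.diag_isDiag v)
    simp [he, incCount, hloop]
  · simp [he]

theorem existsUnique_of_degreeIn_eq_one [Fintype E] (hS : ∀ e ∈ S, ¬ (G.ends e).IsDiag)
    {v : V} (hv : G.degreeIn S v = 1) : ∃! e, e ∈ S ∧ v ∈ G.ends e := by
  classical
  rw [degreeIn_eq_card_of_not_isDiag G hS, card_eq_one_iff_existsUnique] at hv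
  simpa using hv

theorem not_isDiag_of_forall_ends_eq (hfree : ∀ v, f v ≠ v)
    (hS : ∀ e ∈ S, ∃ w, G.ends e = s(w, f w)) : ∀ e ∈ S, ¬ (G.ends e).IsDiag := by
  intro e he
  obtain ⟨w, hw⟩ := hS e he
  rw [hw, Sym2.mk_isDiag_iff]
  exact (hfree w).symm

open Classical in
theorem degreeIn_eq_card_ends_eq [Fintype E] (hf : f.Involutive) (hfree : ∀ v, f v ≠ v)
    (hS : ∀ e ∈ S, ∃ w, G.ends e = s(w, f w)) (v : V) :
    G.degreeIn S v = #{e | e ∈ S ∧ G.ends e = s(v, f v)} := by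
  rw [degreeIn_eq_card_of_not_isDiag G (G.not_isDiag_of_forall_ends_eq hfree hS)]
  congr 1
  refine filter_congr fun e _ => and_congr_right fun he => ?_
  obtain ⟨w, hw⟩ := hS e he
  rw [hw]
  exact hf.mem_sym2_mk_iff

theorem exists_regular_subset [Fintype E] (hf : f.Involutive) (hfree : ∀ v, f v ≠ v)
    (hS : ∀ e ∈ S, ∃ w, G.ends e = s(w, f w)) (n : ℕ) (hn : ∀ v, n ≤ G.degreeIn S v) :
    ∃ T ⊆ S, ∀ v, G.degreeIn T v = n := by
  classical
  obtain ⟨T, hTS, hT⟩ := exists_subset_card_filter_eq G.ends S n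
  refine ⟨T, hTS, fun v => ?_⟩
  rw [G.degreeIn_eq_card_ends_eq hf hfree (fun e he => hS e (hTS he))]
  convert hT s(v, f v) ((hn v).trans_eq ?_)
  convert G.degreeIn_eq_card_ends_eq hf hfree hS v

theorem exists_bool_ne_of_forall_ends_eq (hf : f.Involutive) (hfree : ∀ v, f v ≠ v)
    (hS : ∀ e ∈ S, ∃ w, G.ends e = s(w, f w)) :
    ∃ c : V → Bool, ∀ e ∈ S, ∀ x y, G.ends e = s(x, y) → c x ≠ c y := by
  obtain ⟨c, hc⟩ := hf.exists_bool_ne hfree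
  refine ⟨c, fun e he x y hxy => ?_⟩
  obtain ⟨w, hw⟩ := hS e he
  rcases Sym2.eq_iff.mp (hxy.symm.trans hw) with ⟨rfl, rfl⟩ | ⟨rfl, rfl⟩
  · exact (hc x).symm
  · exact hc y

end Multigraph

theorem exists_ends_eq_of_mem_genEdges {Γ V E : Type*} [Group Γ] [MulAction Γ V]
    (G : Multigraph V E) (u : V) {l : Γ} (hlc : l ∈ Subgroup.center Γ) {e : E}
    (he : e ∈ genEdges G u l) : ∃ v, G.ends e = s(v, l • v) := by
  obtain ⟨γ, β, hβ, hends⟩ := he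
  refine ⟨γ • u, ?_⟩
  rw [hends, Subgroup.mem_center_iff.mp hlc (γ * β), mul_smul, mul_smul,
    MulAction.mem_stabilizer_iff.mp hβ]

open Multigraph in
theorem stmt18_general {Γ V E : Type*} [Group Γ] [MulAction Γ V] [Fintype E]
    (G : Multigraph V E)
    (u : V) (l : Γ) (hl2 : l ^ 2 = 1) (hlc : l ∈ Subgroup.center Γ)
    (hfree : ∀ v : V, l • v ≠ v)
    (k : ℕ) (hdeg : ∀ v : V, G.degreeIn (genEdges G u l) v = k) :
    (∀ e ∈ genEdges G u l, ∃ v : V, G.ends e = s(v, l • v)) ∧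
      (∀ v : V, Nat.card {e : E // e ∈ genEdges G u l ∧ G.ends e = s(v, l • v)} = k) ∧
      (k = 1 → ∀ v : V, ∃! e : E, e ∈ genEdges G u l ∧ v ∈ G.ends e) ∧
      (3 ≤ k → ∃ T ⊆ genEdges G u l, (∀ v : V, G.degreeIn T v = 3) ∧
        ∃ c : V → Bool, ∀ e ∈ T, ∀ x y : V, G.ends e = s(x, y) → c x ≠ c y) := by
  classical
  have hinv : Function.Involutive (l • · : V → V) := fun v => by
    show l • l • v = v
    rw [smul_smul, ← sq, hl2, one_smul]
  have hS : ∀ e ∈ genEdges G u l, ∃ v, G.ends e = s(v, l • v) := fun e =>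
    exists_ends_eq_of_mem_genEdges G u hlc
  refine ⟨hS, fun v => ?_, fun hk v => ?_, fun hk => ?_⟩
  · rw [Nat.card_eq_fintype_card, Fintype.card_subtype, ← hdeg v,
      G.degreeIn_eq_card_ends_eq hinv hfree hS]
  · exact G.existsUnique_of_degreeIn_eq_one (G.not_isDiag_of_forall_ends_eq hfree hS)
      ((hdeg v).trans hk)
  · obtain ⟨T, hTS, hT⟩ := G.exists_regular_subset hinv hfree hS 3 fun v => hdeg v ▸ hk
    exact ⟨T, hTS, hT,
      G.exists_bool_ne_of_forall_ends_eq hinv hfree fun e he => hS e (hTS he)⟩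

open Multigraph in
/-- Let Γ act transitively on a loopless multigraph G, let u be a vertex and λ a central
involution of Γ acting without fixed vertices, with λ • u adjacent to u, and suppose
every vertex has degree k in the generated subgraph G_{u,λ}. Then every connected
component of G_{u,λ} consists of two vertices v, λ • v joined by k parallel edges; if
k = 1 then G_{u,λ} is a perfect matching of G, and if k ≥ 3 then G_{u,λ} contains a
spanning cubic bipartite subgraph. -/
theorem stmt18 {Γ V E : Type*} [Group Γ] [MulAction Γ V] [MulAction Γ E] [Fintype E]
    (G : Multigraph V E) (hloopless : G.Loopless)
    (hcompat : ∀ (γ : Γ) (e : E), G.ends (γ • e) = (G.ends e).map (γ • ·))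
    (htrans : ∀ v w : V, ∃ γ : Γ, γ • v = w)
    (u : V) (l : Γ) (hl2 : l ^ 2 = 1) (hl1 : l ≠ 1) (hlc : l ∈ Subgroup.center Γ)
    (hfree : ∀ v : V, l • v ≠ v)
    (hadj : G.Adj u (l • u))
    (k : ℕ) (hdeg : ∀ v : V, G.degreeIn (genEdges G u l) v = k) :
    (∀ e ∈ genEdges G u l, ∃ v : V, G.ends e = s(v, l • v)) ∧
      (∀ v : V, Nat.card {e : E // e ∈ genEdges G u l ∧ G.ends e = s(v, l • v)} = k) ∧
      (k = 1 → ∀ v : V, ∃! e : E, e ∈ genEdges G u l ∧ v ∈ G.ends e) ∧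
      (3 ≤ k → ∃ T ⊆ genEdges G u l, (∀ v : V, G.degreeIn T v = 3) ∧
        ∃ c : V → Bool, ∀ e ∈ T, ∀ x y : V, G.ends e = s(x, y) → c x ≠ c y) :=
  stmt18_general G u l hl2 hlc hfree k hdeg
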